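/- Let β, r, θ, c > 0, assume at least one of the conditions (a) 0 < r ≤ 1 and 0 < θ ≤ 1 + β - r; (b) 0 < r < 1, 1 + β - r < θ ≤ (1 + β - r)²/β, and c ≥ θ/(1 + β - r) - 1; (c) 0 < r < 1, θ > (1 + β - r)²/β, and c ≥ (√β - √θ)²/(1 - r) holds, and assume in addition that either β ≤ r or θ ≥ (β - r)(1 + c). Then the set M = {(u,v) ∈ ℝ² : 0 ≤ u ≤ 1 and 0 ≤ v ≤ 2 - u} is invariant under V₁, i.e. V₁(M) ⊆ M. -/

import Mathlib

/-! In coordinates, `V₁(u, v) = (u (2 - u - v), v g(u))` with the predator growth factor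
`g(u) = β u + 1 - r - θ u / (1 + c u)`. The prey coordinate stays in `[0, 1]` because
`u (2 - u) = 1 - (1 - u)²`, and once `0 ≤ g ≤ 1` on `[0, 1]` the bound `v ≤ 2 - u` is preserved.
Clearing the denominator, `g ≥ 0` is the quadratic inequality `θ u ≤ (β u + 1 - r)(1 + c u)`,
which holds under each of (a), (b), (c), and `g ≤ 1` is `(β u - r)(1 + c u) ≤ θ u`, which holds
under the extra assumption. -/

/-- The map `V₁(u,v) = (u(2-u) - u v, β u v + (1-r) v - θ u v/(1 + c u))`. -/
noncomputable def V1 (β r θ c : ℝ) (p : ℝ × ℝ) : ℝ × ℝ :=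
  (p.1 * (2 - p.1) - p.1 * p.2,
   β * p.1 * p.2 + (1 - r) * p.2 - θ * p.1 * p.2 / (1 + c * p.1))

/-- The set `M = {(u,v) : 0 ≤ u ≤ 1, 0 ≤ v ≤ 2 - u}`. -/
def Mset : Set (ℝ × ℝ) :=
  {p : ℝ × ℝ | 0 ≤ p.1 ∧ p.1 ≤ 1 ∧ 0 ≤ p.2 ∧ p.2 ≤ 2 - p.1}

noncomputable def growthFactor (β r θ c u : ℝ) : ℝ :=
  β * u + (1 - r) - θ * u / (1 + c * u)

theorem V1_apply (β r θ c u v : ℝ) :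
    V1 β r θ c (u, v) = (u * (2 - u - v), v * growthFactor β r θ c u) := by
  simp only [V1, growthFactor, Prod.mk.injEq]
  constructor <;> ring

theorem mk_mul_mem_Mset {u v G : ℝ} (hp : (u, v) ∈ Mset) (hG0 : 0 ≤ G) (hG1 : G ≤ 1) :
    (u * (2 - u - v), v * G) ∈ Mset := by
  obtain ⟨hu0, hu1, hv0, hv2⟩ := hp
  have hvG : v * G ≤ v := mul_le_of_le_one_right hv0 hG1
  have hv1u : v * (1 - u) ≤ (2 - u) * (1 - u) := mul_le_mul_of_nonneg_right hv2 (by linarith)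
  refine ⟨mul_nonneg hu0 (by linarith), ?_, mul_nonneg hv0 hG0, ?_⟩
  · nlinarith [sq_nonneg (1 - u), mul_nonneg hu0 hv0]
  · nlinarith

section GrowthFactor

variable {β r θ c u : ℝ}

theorem growthFactor_nonneg_iff (hcu : 0 < 1 + c * u) :
    0 ≤ growthFactor β r θ c u ↔ θ * u ≤ (β * u + (1 - r)) * (1 + c * u) := by
  rw [growthFactor, sub_nonneg, div_le_iff₀ hcu]

theorem growthFactor_le_one_iff (hcu : 0 < 1 + c * u) :
    growthFactor β r θ c u ≤ 1 ↔ (β * u - r) * (1 + c * u) ≤ θ * u := by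
  rw [growthFactor, ← le_div_iff₀ hcu]
  constructor <;> intro h <;> linarith

theorem growthFactor_nonneg_of_le_one_add_sub (hβ : 0 ≤ β) (hc : 0 ≤ c) (hu0 : 0 ≤ u)
    (hu1 : u ≤ 1) (hr : r ≤ 1) (hθ : θ ≤ 1 + β - r) : 0 ≤ growthFactor β r θ c u := by
  rw [growthFactor_nonneg_iff (by positivity)]
  nlinarith [mul_nonneg (mul_nonneg hβ hc) (mul_nonneg hu0 hu0),
    mul_nonneg (sub_nonneg.2 hr) (mul_nonneg hc hu0),
    mul_nonneg (sub_nonneg.2 hr) (sub_nonneg.2 hu1),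
    mul_nonneg hu0 (sub_nonneg.2 hθ)]

theorem growthFactor_nonneg_of_le_sq_div (hβ : 0 < β) (hc : 0 ≤ c) (hu0 : 0 ≤ u) (hu1 : u ≤ 1)
    (hr : r < 1) (hsθ : 1 + β - r ≤ θ) (hθs : θ ≤ (1 + β - r) ^ 2 / β)
    (hcθ : θ / (1 + β - r) - 1 ≤ c) : 0 ≤ growthFactor β r θ c u := by
  set s := 1 + β - r with hs_def
  have hs : 0 < s := by linarith
  have hβθ : 0 ≤ s ^ 2 - β * θ := by
    rw [le_div_iff₀ hβ] at hθs
    linarith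
  have hcs : 0 ≤ c * s - (θ - s) := by
    rw [sub_le_iff_le_add, div_le_iff₀ hs] at hcθ
    linarith
  -- the last two terms are the left-hand side at the extreme value `c = θ / s - 1`
  have key : s * ((β * u + (1 - r)) * (1 + c * u) - θ * u) =
      (β * u + (1 - r)) * u * (c * s - (θ - s)) + β * (θ - s) * (1 - u) ^ 2 +
        (s ^ 2 - β * θ) * (1 - u) := by
    rw [hs_def]; ring
  have hrhs : 0 ≤ s * ((β * u + (1 - r)) * (1 + c * u) - θ * u) := by
    rw [key]
    have hlin : 0 ≤ β * u + (1 - r) := by nlinarith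
    have hθs' : 0 ≤ θ - s := by linarith
    have hu1' : 0 ≤ 1 - u := by linarith
    positivity
  rw [growthFactor_nonneg_iff (by positivity)]
  exact sub_nonneg.1 (nonneg_of_mul_nonneg_right hrhs hs)

theorem growthFactor_nonneg_of_sqrt_sub_sq_le (hβ : 0 ≤ β) (hθ : 0 ≤ θ) (hc : 0 ≤ c)
    (hu0 : 0 ≤ u) (hr : r < 1) (hcθ : (√β - √θ) ^ 2 / (1 - r) ≤ c) :
    0 ≤ growthFactor β r θ c u := by
  have h1r : 0 < 1 - r := by linarith
  set a := √β
  set e := √c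
  set f := √(1 - r)
  have ha : a ^ 2 = β := Real.sq_sqrt hβ
  have he : e ^ 2 = c := Real.sq_sqrt hc
  have hf : f ^ 2 = 1 - r := Real.sq_sqrt h1r.le
  have hθa : √θ ≤ a + e * f := by
    have hsq : (a - √θ) ^ 2 ≤ (e * f) ^ 2 := by
      rw [mul_pow, he, hf, ← div_le_iff₀ h1r]; exact hcθ
    linarith [(abs_le_of_sq_le_sq' hsq (by positivity)).1]
  rw [growthFactor_nonneg_iff (by positivity)]
  calc θ * u = √θ ^ 2 * u := by rw [Real.sq_sqrt hθ]
    _ ≤ (a + e * f) ^ 2 * u := by gcongr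
    _ = (a ^ 2 + e ^ 2 * f ^ 2) * u + 2 * (a * e * u) * f := by ring
    _ ≤ (a ^ 2 + e ^ 2 * f ^ 2) * u + ((a * e * u) ^ 2 + f ^ 2) := by
      gcongr; exact two_mul_le_add_sq _ _
    _ = (β * u + (1 - r)) * (1 + c * u) := by rw [← ha, ← he, ← hf]; ring

theorem growthFactor_le_one (hβ : 0 ≤ β) (hr : 0 ≤ r) (hθ : 0 ≤ θ) (hc : 0 ≤ c)
    (hu0 : 0 ≤ u) (hu1 : u ≤ 1) (hextra : β ≤ r ∨ (β - r) * (1 + c) ≤ θ) :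
    growthFactor β r θ c u ≤ 1 := by
  have hcu : 0 < 1 + c * u := by positivity
  rw [growthFactor_le_one_iff hcu]
  rcases hextra with hβr | hθ'
  · have : β * u - r ≤ 0 := by nlinarith
    nlinarith [mul_nonneg hθ hu0]
  · nlinarith [mul_nonneg (sub_nonneg.2 hu1) (by positivity : 0 ≤ r + β * c * u),
      mul_nonneg hu0 (sub_nonneg.2 hθ')]

end GrowthFactor

/-- Under one of nonnegativity conditions (a), (b), (c) and the extra assumption
`β ≤ r` or `θ ≥ (β - r)(1 + c)`, the set `M` is invariant under `V₁`. -/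
theorem Mset_invariant_V1 (β r θ c : ℝ) (hβ : 0 < β) (hr : 0 < r)
    (hθ : 0 < θ) (hc : 0 < c)
    (hcond :
      (r ≤ 1 ∧ θ ≤ 1 + β - r) ∨
      (r < 1 ∧ 1 + β - r < θ ∧ θ ≤ (1 + β - r) ^ 2 / β ∧
        θ / (1 + β - r) - 1 ≤ c) ∨
      (r < 1 ∧ (1 + β - r) ^ 2 / β < θ ∧
        (Real.sqrt β - Real.sqrt θ) ^ 2 / (1 - r) ≤ c))
    (hextra : β ≤ r ∨ (β - r) * (1 + c) ≤ θ) :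
    ∀ p ∈ Mset, V1 β r θ c p ∈ Mset := by
  rintro ⟨u, v⟩ hp
  have hu0 : 0 ≤ u := hp.1
  have hu1 : u ≤ 1 := hp.2.1
  have hG0 : 0 ≤ growthFactor β r θ c u := by
    rcases hcond with ⟨hr1, hθs⟩ | ⟨hr1, hsθ, hθs, hcθ⟩ | ⟨hr1, -, hcθ⟩
    · exact growthFactor_nonneg_of_le_one_add_sub hβ.le hc.le hu0 hu1 hr1 hθs
    · exact growthFactor_nonneg_of_le_sq_div hβ hc.le hu0 hu1 hr1 hsθ.le hθs hcθ
    · exact growthFactor_nonneg_of_sqrt_sub_sq_le hβ.le hθ.le hc.le hu0 hr1 hcθ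
  have hG1 := growthFactor_le_one hβ.le hr.le hθ.le hc.le hu0 hu1 hextra
  rw [V1_apply]
  exact mk_mul_mem_Mset hp hG0 hG1
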